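/- arXiv:2203.03581 — 6 statements merged into one kernel-verified Lean document; each statement's English description precedes it below -/
import Mathlib

section
/- Let (V0, V1, E) be a (w0, w1)-regular bipartite graph that is a 1-sided (c, ε)-lossless expander from V0 to V1. Then for every subset v0 ⊆ V0 with |v0| < c·|V0|, the number of unique neighbors of v0 satisfies |N^unique(v0)| ≥ (1 − 2ε)·w0·|v0|, where a unique neighbor of v0 is a vertex x1 ∈ V1 adjacent to exactly one vertex of v0. -/
open scoped Classical

noncomputable section

/-- The degree of a vertex `x : V0` in a bipartite graph with edge relation `E`. -/
def degL {V0 V1 : Type*} [Fintype V1] (E : V0 → V1 → Prop) (x : V0) : ℕ :=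
  (Finset.univ.filter fun y => E x y).card

/-- The degree of a vertex `y : V1` in a bipartite graph with edge relation `E`. -/
def degR {V0 V1 : Type*} [Fintype V0] (E : V0 → V1 → Prop) (y : V1) : ℕ :=
  (Finset.univ.filter fun x => E x y).card

/-- The set of neighbors in `V1` of a subset `S ⊆ V0`. -/
def nbhd {V0 V1 : Type*} [Fintype V1] (E : V0 → V1 → Prop) (S : Finset V0) : Finset V1 :=
  Finset.univ.filter fun y => ∃ x ∈ S, E x y

/-- The set of unique neighbors of `S ⊆ V0`: vertices of `V1` adjacent to exactly one
vertex of `S`. -/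
def uniqueNbhd {V0 V1 : Type*} [Fintype V1] (E : V0 → V1 → Prop) (S : Finset V0) : Finset V1 :=
  Finset.univ.filter fun y => (S.filter fun x => E x y).card = 1

/-- **Lossless expander implies unique expander.**
If a `(w0, w1)`-regular bipartite graph is a 1-sided `(c, ε)`-lossless expander from `V0` to
`V1`, then every `v0 ⊆ V0` with `|v0| < c·|V0|` has at least `(1 − 2ε)·w0·|v0|` unique
neighbors. -/
theorem lossless_implies_unique_expander {V0 V1 : Type*} [Fintype V0] [Fintype V1]
    (E : V0 → V1 → Prop) (w0 w1 : ℕ) (c ε : ℝ)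
    (hregL : ∀ x : V0, degL E x = w0)
    (hregR : ∀ y : V1, degR E y = w1)
    (hexp : ∀ S : Finset V0, (S.card : ℝ) < c * Fintype.card V0 →
      (1 - ε) * w0 * S.card ≤ ((nbhd E S).card : ℝ)) :
    ∀ v0 : Finset V0, (v0.card : ℝ) < c * Fintype.card V0 →
      (1 - 2 * ε) * w0 * v0.card ≤ ((uniqueNbhd E v0).card : ℝ) := by
  intro v0 hv0
  -- double counting: total edges from v0
  have hsum : ∑ y : V1, (v0.filter fun x => E x y).card = w0 * v0.card := by
    have : ∑ y : V1, (v0.filter fun x => E x y).card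
        = ∑ x ∈ v0, degL E x := by
      simp only [Finset.card_filter, degL]
      rw [Finset.sum_comm]
    rw [this]
    simp [hregL, mul_comm]
  -- sum restricted to nbhd
  have hsupp : ∑ y ∈ nbhd E v0, (v0.filter fun x => E x y).card = w0 * v0.card := by
    rw [← hsum]
    apply Finset.sum_subset (Finset.subset_univ _)
    intro y _ hy
    rw [Finset.card_eq_zero, Finset.filter_eq_empty_iff]
    intro x hx hE
    exact hy (by simp [nbhd]; exact ⟨x, hx, hE⟩)
  -- unique nbhd ⊆ nbhd
  have hUsub : uniqueNbhd E v0 ⊆ nbhd E v0 := by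
    intro y hy
    simp only [uniqueNbhd, Finset.mem_filter] at hy
    obtain ⟨x, hx⟩ := Finset.card_eq_one.mp hy.2
    have hxm : x ∈ v0.filter fun x => E x y := hx ▸ Finset.mem_singleton_self x
    simp only [Finset.mem_filter] at hxm
    simp only [nbhd, Finset.mem_filter, Finset.mem_univ, true_and]
    exact ⟨x, hxm.1, hxm.2⟩
  -- key inequality: 2 * |N| ≤ w0 * |v0| + |U|
  have hkey : 2 * (nbhd E v0).card ≤ w0 * v0.card + (uniqueNbhd E v0).card := by
    have h1 : ∑ y ∈ nbhd E v0, 2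
        ≤ ∑ y ∈ nbhd E v0, ((v0.filter fun x => E x y).card
            + if y ∈ uniqueNbhd E v0 then 1 else 0) := by
      apply Finset.sum_le_sum
      intro y hy
      simp only [nbhd, Finset.mem_filter, Finset.mem_univ, true_and] at hy
      obtain ⟨x, hx, hE⟩ := hy
      have hpos : 1 ≤ (v0.filter fun x => E x y).card :=
        Finset.card_pos.mpr ⟨x, Finset.mem_filter.mpr ⟨hx, hE⟩⟩
      by_cases hu : y ∈ uniqueNbhd E v0
      · simp only [hu, if_pos]
        omega
      · simp only [hu, if_neg, not_false_iff]
        have : (v0.filter fun x => E x y).card ≠ 1 := by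
          simp only [uniqueNbhd, Finset.mem_filter, Finset.mem_univ, true_and] at hu
          exact hu
        omega
    rw [Finset.sum_add_distrib, hsupp] at h1
    simp only [Finset.sum_const, smul_eq_mul, mul_comm] at h1
    have h2 : ∑ y ∈ nbhd E v0, (if y ∈ uniqueNbhd E v0 then 1 else 0)
        = (uniqueNbhd E v0).card := by
      rw [Finset.sum_ite_mem, Finset.inter_eq_right.mpr hUsub, Finset.card_eq_sum_ones]
    omega
  -- finish with reals
  have hN := hexp v0 hv0
  have hkeyR : 2 * ((nbhd E v0).card : ℝ) ≤ w0 * v0.card + (uniqueNbhd E v0).card := by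
    exact_mod_cast hkey
  nlinarith [hN, hkeyR]
end
end

section
/- Let (V0, V1, E) be a (w0, w1)-regular bipartite graph that is a 1-sided (c, ε)-lossless expander from V0 to V1. Then for all subsets v0 ⊆ V0 and v1 ⊆ V1 with |v0| < c·|V0|, the number of edges between v0 and v1 satisfies |E(v0, v1)| = Σ_{x0 ∈ v0} deg_{v1}(x0) ≤ ε·w0·|v0| + |v1|. -/
open scoped Classical

noncomputable section

/-- For a `(w0, w1)`-regular 1-sided `(c, ε)`-lossless expander from `V0` to `V1`,
and any `v0 ⊆ V0` with `|v0| < c·|V0|` and `v1 ⊆ V1`, the number of edges between `v0` and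
`v1`, i.e. `Σ_{x0 ∈ v0} deg_{v1}(x0)`, is at most `ε·w0·|v0| + |v1|`. -/
theorem edge_count_bound {V0 V1 : Type*} [Fintype V0] [Fintype V1]
    (E : V0 → V1 → Prop) (w0 w1 : ℕ) (c ε : ℝ)
    (hregL : ∀ x : V0, degL E x = w0)
    (hregR : ∀ y : V1, degR E y = w1)
    (hexp : ∀ S : Finset V0, (S.card : ℝ) < c * Fintype.card V0 →
      (1 - ε) * w0 * S.card ≤ ((nbhd E S).card : ℝ)) :
    ∀ (v0 : Finset V0) (v1 : Finset V1), (v0.card : ℝ) < c * Fintype.card V0 →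
      ((∑ x0 ∈ v0, (v1.filter fun y => E x0 y).card : ℕ) : ℝ) ≤ ε * w0 * v0.card + v1.card := by
  intro v0 v1 hsize
  set N := nbhd E v0 with hN
  -- each vertex of N \ v1 has at least one neighbor in v0
  have h1 : (N \ v1).card ≤ ∑ x0 ∈ v0, ((N \ v1).filter fun y => E x0 y).card := by
    have : ∑ x0 ∈ v0, ((N \ v1).filter fun y => E x0 y).card
        = ∑ y ∈ N \ v1, (v0.filter fun x => E x y).card := by
      simp only [Finset.card_filter]
      exact Finset.sum_comm
    rw [this]
    calc (N \ v1).card = ∑ y ∈ N \ v1, 1 := by simp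
    _ ≤ ∑ y ∈ N \ v1, (v0.filter fun x => E x y).card := by
        apply Finset.sum_le_sum
        intro y hy
        have hyN : y ∈ N := (Finset.mem_sdiff.mp hy).1
        simp only [hN, nbhd, Finset.mem_filter] at hyN
        obtain ⟨x, hx, hE⟩ := hyN.2
        have : x ∈ v0.filter fun x => E x y := Finset.mem_filter.mpr ⟨hx, hE⟩
        exact Finset.card_pos.mpr ⟨x, this⟩
  -- edges into v1 plus edges into N \ v1 are at most all edges from v0
  have h2 : ∑ x0 ∈ v0, (v1.filter fun y => E x0 y).card
      + ∑ x0 ∈ v0, ((N \ v1).filter fun y => E x0 y).card ≤ w0 * v0.card := by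
    have : ∀ x0 ∈ v0, (v1.filter fun y => E x0 y).card
        + ((N \ v1).filter fun y => E x0 y).card ≤ w0 := by
      intro x0 _
      have hd : Disjoint (v1.filter fun y => E x0 y) ((N \ v1).filter fun y => E x0 y) := by
        exact Finset.disjoint_filter_filter Finset.sdiff_disjoint.symm
      calc (v1.filter fun y => E x0 y).card + ((N \ v1).filter fun y => E x0 y).card
          = ((v1.filter fun y => E x0 y) ∪ ((N \ v1).filter fun y => E x0 y)).card :=
            (Finset.card_union_of_disjoint hd).symm
        _ ≤ (Finset.univ.filter fun y => E x0 y).card := by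
            apply Finset.card_le_card
            intro y hy
            simp only [Finset.mem_union, Finset.mem_filter] at hy ⊢
            exact ⟨Finset.mem_univ y, by tauto⟩
        _ = w0 := hregL x0
    calc ∑ x0 ∈ v0, (v1.filter fun y => E x0 y).card
        + ∑ x0 ∈ v0, ((N \ v1).filter fun y => E x0 y).card
        = ∑ x0 ∈ v0, ((v1.filter fun y => E x0 y).card
            + ((N \ v1).filter fun y => E x0 y).card) := (Finset.sum_add_distrib).symm
      _ ≤ ∑ x0 ∈ v0, w0 := Finset.sum_le_sum this
      _ = w0 * v0.card := by simp [Finset.sum_const, mul_comm]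
  -- expansion bound
  have h3 : (1 - ε) * w0 * v0.card ≤ (N.card : ℝ) := hexp v0 hsize
  have h4 : (N.card : ℝ) ≤ (N \ v1).card + v1.card := by
    have hsub : N.card ≤ (N \ v1).card + v1.card := by
      calc N.card ≤ ((N \ v1) ∪ v1).card := Finset.card_le_card (by
            intro y hy
            by_cases h : y ∈ v1 <;> simp [Finset.mem_union, Finset.mem_sdiff, hy, h])
        _ ≤ (N \ v1).card + v1.card := Finset.card_union_le _ _
    exact_mod_cast hsub
  have h1' : ((N \ v1).card : ℝ) ≤ ∑ x0 ∈ v0, (((N \ v1).filter fun y => E x0 y).card : ℝ) := by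
    rw [← Nat.cast_sum]; exact_mod_cast h1
  have h2' : (∑ x0 ∈ v0, ((v1.filter fun y => E x0 y).card : ℝ))
      + ∑ x0 ∈ v0, (((N \ v1).filter fun y => E x0 y).card : ℝ) ≤ (w0 : ℝ) * v0.card := by
    rw [← Nat.cast_sum, ← Nat.cast_sum]
    exact_mod_cast h2
  rw [Nat.cast_sum]
  push_cast
  nlinarith [h1', h2', h3, h4]
end
end

section
/- Let (V0, V1, E) be a (w0, w1)-regular bipartite graph that is a 1-sided (c, ε)-lossless expander from V0 to V1. Then for all subsets v0 ⊆ V0 and v1 ⊆ V1 with |v0| < c·|V0|, one has Σ_{x0 ∈ v0} max(deg_{v1}(x0) − ε·w0, 0) ≤ |v1|. -/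
open scoped Classical

noncomputable section

/-- For a `(w0, w1)`-regular 1-sided `(c, ε)`-lossless expander from `V0` to `V1`,
and any `v0 ⊆ V0` with `|v0| < c·|V0|` and any `v1 ⊆ V1`,
one has `Σ_{x0 ∈ v0} max(deg_{v1}(x0) − ε·w0, 0) ≤ |v1|`. -/
theorem truncated_degree_sum_bound {V0 V1 : Type*} [Fintype V0] [Fintype V1]
    (E : V0 → V1 → Prop) (w0 w1 : ℕ) (c ε : ℝ)
    (hregL : ∀ x : V0, degL E x = w0)
    (hregR : ∀ y : V1, degR E y = w1)
    (hexp : ∀ S : Finset V0, (S.card : ℝ) < c * Fintype.card V0 →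
      (1 - ε) * w0 * S.card ≤ ((nbhd E S).card : ℝ)) :
    ∀ (v0 : Finset V0) (v1 : Finset V1), (v0.card : ℝ) < c * Fintype.card V0 →
      ∑ x0 ∈ v0, max (((v1.filter fun y => E x0 y).card : ℝ) - ε * w0) 0 ≤ (v1.card : ℝ) := by
  intro v0 v1 hv0
  set S := v0.filter (fun x => ε * w0 < ((v1.filter fun y => E x y).card : ℝ)) with hSdef
  have hSsub : S ⊆ v0 := Finset.filter_subset _ _
  have hScard : (S.card : ℝ) < c * Fintype.card V0 :=
    lt_of_le_of_lt (by exact_mod_cast Finset.card_le_card hSsub) hv0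
  -- rewrite LHS as a sum over S
  have hsum : ∑ x0 ∈ v0, max (((v1.filter fun y => E x0 y).card : ℝ) - ε * w0) 0
      = ∑ x ∈ S, (((v1.filter fun y => E x y).card : ℝ) - ε * w0) := by
    rw [← Finset.sum_subset hSsub]
    · exact Finset.sum_congr rfl fun x hx => by
        have := (Finset.mem_filter.mp hx).2
        exact max_eq_left (by linarith)
    · intro x hx hnx
      have : ¬ (ε * w0 < ((v1.filter fun y => E x y).card : ℝ)) := by
        intro h; exact hnx (Finset.mem_filter.mpr ⟨hx, h⟩)
      exact max_eq_right (by linarith [not_lt.mp this])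
  rw [hsum]
  -- key counting inequality over ℕ
  have hkey : ∑ x ∈ S, (v1.filter fun y => E x y).card + ((nbhd E S) \ v1).card
      ≤ w0 * S.card := by
    have hsplit : ∀ x ∈ S,
        (v1.filter fun y => E x y).card + (v1ᶜ.filter fun y => E x y).card = w0 := by
      intro x _
      rw [← hregL x, degL, ← Finset.union_compl v1, Finset.filter_union,
        Finset.card_union_of_disjoint (Finset.disjoint_filter_filter disjoint_compl_right)]
    have hB : ((nbhd E S) \ v1).card ≤ ∑ x ∈ S, (v1ᶜ.filter fun y => E x y).card := by
      have hsub : (nbhd E S) \ v1 ⊆ S.biUnion fun x => v1ᶜ.filter fun y => E x y := by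
        intro y hy
        obtain ⟨hy1, hy2⟩ := Finset.mem_sdiff.mp hy
        obtain ⟨x, hxS, hxy⟩ := (Finset.mem_filter.mp hy1).2
        exact Finset.mem_biUnion.mpr ⟨x, hxS,
          Finset.mem_filter.mpr ⟨Finset.mem_compl.mpr hy2, hxy⟩⟩
      exact le_trans (Finset.card_le_card hsub) (Finset.card_biUnion_le)
    calc ∑ x ∈ S, (v1.filter fun y => E x y).card + ((nbhd E S) \ v1).card
        ≤ ∑ x ∈ S, (v1.filter fun y => E x y).card
            + ∑ x ∈ S, (v1ᶜ.filter fun y => E x y).card := by omega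
      _ = ∑ x ∈ S, ((v1.filter fun y => E x y).card
            + (v1ᶜ.filter fun y => E x y).card) := (Finset.sum_add_distrib).symm
      _ = ∑ x ∈ S, w0 := Finset.sum_congr rfl hsplit
      _ = w0 * S.card := by rw [Finset.sum_const, smul_eq_mul, mul_comm]
  have hexpS := hexp S hScard
  have hN : ((nbhd E S).card : ℝ)
      ≤ (((nbhd E S) \ v1).card : ℝ) + (v1.card : ℝ) := by
    have h1 : (nbhd E S).card = ((nbhd E S) ∩ v1).card + ((nbhd E S) \ v1).card :=
      (Finset.card_inter_add_card_sdiff _ _).symm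
    have h2 : ((nbhd E S) ∩ v1).card ≤ v1.card :=
      Finset.card_le_card (Finset.inter_subset_right)
    have : (nbhd E S).card ≤ ((nbhd E S) \ v1).card + v1.card := by omega
    exact_mod_cast this
  have hkeyR : (∑ x ∈ S, ((v1.filter fun y => E x y).card : ℝ))
      + (((nbhd E S) \ v1).card : ℝ) ≤ (w0 : ℝ) * S.card := by
    exact_mod_cast hkey
  rw [Finset.sum_sub_distrib, Finset.sum_const, nsmul_eq_mul]
  nlinarith [hexpS, hN, hkeyR]
end
end

section
/- For the balanced product X↕ ×_G X↔ of two bipartite graphs with free G-invariant actions, the F2-linear maps ∂2 : F2^{V00} → F2^{V10} ⊕ F2^{V01} and ∂1 : F2^{V10} ⊕ F2^{V01} → F2^{V11} induced by the adjacency matrices of the balanced product graph satisfy ∂1 ∘ ∂2 = 0; that is, L(E1•)∘L(E•0) + L(E•1)∘L(E0•) = 0 over F2. -/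
open scoped Classical

noncomputable section

/-- Vertex set of the balanced product: orbits of the diagonal `G`-action on `A × B`. -/
abbrev BPV (G : Type*) [Group G] (A B : Type*) [MulAction G A] [MulAction G B] :=
  Quotient (MulAction.orbitRel G (A × B))

/-- The orbit `[(a, b)]` as a balanced-product vertex. -/
def bpmk (G : Type*) [Group G] {A B : Type*} [MulAction G A] [MulAction G B]
    (a : A) (b : B) : BPV G A B :=
  Quotient.mk (MulAction.orbitRel G (A × B)) (a, b)

/-- Vertical edges of the balanced product: pairs `([x0, y], [x1, y])` with `(x0, x1)`
an edge of the first factor. -/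
def EV (G : Type*) [Group G] {A0 A1 B : Type*}
    [MulAction G A0] [MulAction G A1] [MulAction G B]
    (Eud : A0 → A1 → Prop) (z0 : BPV G A0 B) (z1 : BPV G A1 B) : Prop :=
  ∃ (x0 : A0) (x1 : A1) (y : B), Eud x0 x1 ∧ z0 = bpmk G x0 y ∧ z1 = bpmk G x1 y

/-- Horizontal edges of the balanced product: pairs `([x, y0], [x, y1])` with `(y0, y1)`
an edge of the second factor. -/
def EH (G : Type*) [Group G] {A B0 B1 : Type*}
    [MulAction G A] [MulAction G B0] [MulAction G B1]
    (Elr : B0 → B1 → Prop) (z0 : BPV G A B0) (z1 : BPV G A B1) : Prop :=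
  ∃ (x : A) (y0 : B0) (y1 : B1), Elr y0 y1 ∧ z0 = bpmk G x y0 ∧ z1 = bpmk G x y1

/-- F2 adjacency map of a bipartite edge relation: `L(E) e_a = Σ_{b adjacent to a} e_b`. -/
def adj {A B : Type*} [Fintype A] (E : A → B → Prop) (v : A → ZMod 2) : B → ZMod 2 :=
  fun b => ∑ a : A, if E a b then v a else 0

lemma bpmk_eq_iff (G : Type*) [Group G] {A B : Type*} [MulAction G A] [MulAction G B]
    {a a' : A} {b b' : B} :
    bpmk G a b = bpmk G a' b' ↔ ∃ g : G, g • a' = a ∧ g • b' = b := by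
  unfold bpmk
  rw [Quotient.eq, MulAction.orbitRel_apply, MulAction.mem_orbit_iff]
  constructor
  · rintro ⟨g, hg⟩
    exact ⟨g, by simpa [Prod.ext_iff, Prod.smul_def] using hg⟩
  · rintro ⟨g, h1, h2⟩
    exact ⟨g, by simp [Prod.ext_iff, Prod.smul_def, h1, h2]⟩

lemma bpmk_smul (G : Type*) [Group G] {A B : Type*} [MulAction G A] [MulAction G B]
    (g : G) (a : A) (b : B) : bpmk G (g • a) (g • b) = bpmk G a b :=
  (bpmk_eq_iff G).mpr ⟨g, rfl, rfl⟩

section Main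

variable {G V0a V1a Vb0 Vb1 : Type*} [Group G]
    [MulAction G V0a] [MulAction G V1a] [MulAction G Vb0] [MulAction G Vb1]
    {Eud : V0a → V1a → Prop} {Elr : Vb0 → Vb1 → Prop}

lemma equivA (hfree1a : ∀ (g : G) (x : V1a), g • x = x → g = 1)
    (hfreeb0 : ∀ (g : G) (y : Vb0), g • y = y → g = 1)
    (hinvud : ∀ (g : G) (x0 : V0a) (x1 : V1a), Eud x0 x1 → Eud (g • x0) (g • x1))
    (hinvlr : ∀ (g : G) (y0 : Vb0) (y1 : Vb1), Elr y0 y1 → Elr (g • y0) (g • y1))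
    (x0 : V0a) (y0 : Vb0) (x1 : V1a) (y1 : Vb1) :
    Nonempty ({k : G // Eud (k • x0) x1 ∧ Elr (k • y0) y1} ≃
      {z10 : BPV G V1a Vb0 // EV G Eud (bpmk G x0 y0) z10 ∧ EH G Elr z10 (bpmk G x1 y1)}) := by
  refine ⟨Equiv.ofBijective (fun k => ⟨bpmk G (k.1⁻¹ • x1) y0, ?_, ?_⟩) ⟨?_, ?_⟩⟩
  · exact ⟨x0, k.1⁻¹ • x1, y0, by simpa using hinvud k.1⁻¹ _ _ k.2.1, rfl, rfl⟩
  · refine ⟨k.1⁻¹ • x1, y0, k.1⁻¹ • y1, by simpa using hinvlr k.1⁻¹ _ _ k.2.2, rfl, ?_⟩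
    rw [← bpmk_smul G k.1⁻¹ x1 y1]
  · rintro ⟨k, hk⟩ ⟨k', hk'⟩ h
    simp only [Subtype.mk.injEq] at h ⊢
    rw [bpmk_eq_iff] at h
    obtain ⟨g, hg1, hg2⟩ := h
    have hg : g = 1 := hfreeb0 g y0 hg2
    subst hg
    simp only [one_smul] at hg1
    have hx : (k * k'⁻¹) • x1 = x1 := by
      rw [mul_smul, hg1, smul_inv_smul]
    exact (mul_inv_eq_one.mp (hfree1a _ _ hx)).symm ▸ rfl
  · rintro ⟨z10, ⟨a0, a1, y, hud, hz00, hz10⟩, ⟨x, c0, c1, hlr, hz10', hz11⟩⟩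
    obtain ⟨g, hg1, hg2⟩ := (bpmk_eq_iff G).mp hz00.symm
    have hz10b : z10 = bpmk G (g⁻¹ • a1) y0 := by
      rw [hz10, ← hg2, ← bpmk_smul G g⁻¹ a1 (g • y0)]
      simp
    obtain ⟨g2, hg21, hg22⟩ := (bpmk_eq_iff G).mp (hz10b.symm.trans hz10')
    obtain ⟨h, hh1, hh2⟩ := (bpmk_eq_iff G).mp hz11
    refine ⟨⟨h * g2⁻¹, ?_, ?_⟩, ?_⟩
    · have h1 : Eud x0 (g⁻¹ • a1) := by
        have := hinvud g⁻¹ a0 a1 hud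
        rwa [← hg1, inv_smul_smul] at this
      have h3 : (h * g2⁻¹) • (g⁻¹ • a1) = x1 := by
        rw [← hg21, mul_smul, inv_smul_smul, hh1]
      have := hinvud (h * g2⁻¹) _ _ h1
      rwa [h3] at this
    · have := hinvlr h c0 c1 hlr
      rw [hh2] at this
      have hy0 : (h * g2⁻¹) • y0 = h • c0 := by
        rw [← hg22, mul_smul, inv_smul_smul]
      rwa [hy0]
    · simp only [Subtype.mk.injEq]
      rw [hz10b]
      congr 1
      rw [← hh1, ← hg21, mul_inv_rev, inv_inv, mul_smul, inv_smul_smul]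

lemma equivB (hfree0a : ∀ (g : G) (x : V0a), g • x = x → g = 1)
    (hfreeb1 : ∀ (g : G) (y : Vb1), g • y = y → g = 1)
    (hinvud : ∀ (g : G) (x0 : V0a) (x1 : V1a), Eud x0 x1 → Eud (g • x0) (g • x1))
    (hinvlr : ∀ (g : G) (y0 : Vb0) (y1 : Vb1), Elr y0 y1 → Elr (g • y0) (g • y1))
    (x0 : V0a) (y0 : Vb0) (x1 : V1a) (y1 : Vb1) :
    Nonempty ({k : G // Eud (k • x0) x1 ∧ Elr (k • y0) y1} ≃
      {z01 : BPV G V0a Vb1 // EH G Elr (bpmk G x0 y0) z01 ∧ EV G Eud z01 (bpmk G x1 y1)}) := by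
  refine ⟨Equiv.ofBijective (fun k => ⟨bpmk G x0 (k.1⁻¹ • y1), ?_, ?_⟩) ⟨?_, ?_⟩⟩
  · exact ⟨x0, y0, k.1⁻¹ • y1, by simpa using hinvlr k.1⁻¹ _ _ k.2.2, rfl, rfl⟩
  · refine ⟨k.1 • x0, x1, y1, k.2.1, ?_, rfl⟩
    rw [← bpmk_smul G k.1⁻¹ (k.1 • x0) y1, inv_smul_smul]
  · rintro ⟨k, hk⟩ ⟨k', hk'⟩ h
    simp only [Subtype.mk.injEq] at h ⊢
    rw [bpmk_eq_iff] at h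
    obtain ⟨g, hg1, hg2⟩ := h
    have hg : g = 1 := hfree0a g x0 hg1
    subst hg
    simp only [one_smul] at hg2
    have hy : (k * k'⁻¹) • y1 = y1 := by
      rw [mul_smul, hg2, smul_inv_smul]
    exact (mul_inv_eq_one.mp (hfreeb1 _ _ hy)).symm ▸ rfl
  · rintro ⟨z01, ⟨x, c0, c1, hlr, hz00, hz01⟩, ⟨a0, a1, y, hud, hz01', hz11⟩⟩
    obtain ⟨g, hg1, hg2⟩ := (bpmk_eq_iff G).mp hz00.symm
    have hz01b : z01 = bpmk G x0 (g⁻¹ • c1) := by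
      rw [hz01, ← hg1, ← bpmk_smul G g⁻¹ (g • x0) c1]
      simp
    obtain ⟨g2, hg21, hg22⟩ := (bpmk_eq_iff G).mp (hz01b.symm.trans hz01')
    obtain ⟨h, hh1, hh2⟩ := (bpmk_eq_iff G).mp hz11
    refine ⟨⟨h * g2⁻¹, ?_, ?_⟩, ?_⟩
    · have := hinvud h a0 a1 hud
      rw [hh1] at this
      have hx0 : (h * g2⁻¹) • x0 = h • a0 := by
        rw [← hg21, mul_smul, inv_smul_smul]
      rwa [hx0]
    · have h2 : Elr ((h * g2⁻¹ * g⁻¹) • c0) ((h * g2⁻¹ * g⁻¹) • c1) := hinvlr _ _ _ hlr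
      have hy0 : (h * g2⁻¹ * g⁻¹) • c0 = (h * g2⁻¹) • y0 := by
        rw [mul_smul, ← hg2, inv_smul_smul]
      have hy1 : (h * g2⁻¹ * g⁻¹) • c1 = y1 := by
        rw [mul_smul, mul_smul, ← hg22, inv_smul_smul, hh2]
      rwa [hy0, hy1] at h2
    · simp only [Subtype.mk.injEq]
      rw [hz01b]
      congr 1
      rw [← hh2, ← hg22, mul_inv_rev, inv_inv, mul_smul, inv_smul_smul]

end Main

/-- **The balanced product yields a chain complex:** `∂1 ∘ ∂2 = 0`, i.e.
`L(E1•) ∘ L(E•0) + L(E•1) ∘ L(E0•) = 0` over `F2`. -/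
theorem balanced_product_chain_condition
    {G V0a V1a Vb0 Vb1 : Type*} [Group G]
    [Fintype V0a] [Fintype V1a] [Fintype Vb0] [Fintype Vb1]
    [MulAction G V0a] [MulAction G V1a] [MulAction G Vb0] [MulAction G Vb1]
    (Eud : V0a → V1a → Prop) (Elr : Vb0 → Vb1 → Prop)
    (hfree0a : ∀ (g : G) (x : V0a), g • x = x → g = 1)
    (hfree1a : ∀ (g : G) (x : V1a), g • x = x → g = 1)
    (hfreeb0 : ∀ (g : G) (y : Vb0), g • y = y → g = 1)
    (hfreeb1 : ∀ (g : G) (y : Vb1), g • y = y → g = 1)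
    (hinvud : ∀ (g : G) (x0 : V0a) (x1 : V1a), Eud x0 x1 → Eud (g • x0) (g • x1))
    (hinvlr : ∀ (g : G) (y0 : Vb0) (y1 : Vb1), Elr y0 y1 → Elr (g • y0) (g • y1)) :
    ∀ v : BPV G V0a Vb0 → ZMod 2,
      adj (EH G Elr : BPV G V1a Vb0 → BPV G V1a Vb1 → Prop)
          (adj (EV G Eud : BPV G V0a Vb0 → BPV G V1a Vb0 → Prop) v)
        + adj (EV G Eud : BPV G V0a Vb1 → BPV G V1a Vb1 → Prop)
          (adj (EH G Elr : BPV G V0a Vb0 → BPV G V0a Vb1 → Prop) v) = 0 := by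
  intro v
  funext z11
  simp only [Pi.add_apply, Pi.zero_apply, adj]
  have key : ∀ z00 : BPV G V0a Vb0,
      (Finset.univ.filter fun z10 : BPV G V1a Vb0 =>
        EV G Eud z00 z10 ∧ EH G Elr z10 z11).card
      = (Finset.univ.filter fun z01 : BPV G V0a Vb1 =>
        EH G Elr z00 z01 ∧ EV G Eud z01 z11).card := by
    intro z00
    induction z00 using Quotient.ind with
    | _ p =>
    induction z11 using Quotient.ind with
    | _ q =>
    obtain ⟨x0, y0⟩ := p
    obtain ⟨x1, y1⟩ := q
    obtain ⟨eA⟩ := equivA hfree1a hfreeb0 hinvud hinvlr x0 y0 x1 y1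
    obtain ⟨eB⟩ := equivB hfree0a hfreeb1 hinvud hinvlr x0 y0 x1 y1
    rw [← Fintype.card_subtype, ← Fintype.card_subtype]
    exact Fintype.card_congr (eA.symm.trans eB)
  have t1 : (∑ z10 : BPV G V1a Vb0, if EH G Elr z10 z11 then
        (∑ z00 : BPV G V0a Vb0, if EV G Eud z00 z10 then v z00 else 0) else 0)
      = ∑ z00 : BPV G V0a Vb0,
        ((Finset.univ.filter fun z10 : BPV G V1a Vb0 =>
          EV G Eud z00 z10 ∧ EH G Elr z10 z11).card : ZMod 2) * v z00 := by
    calc _ = ∑ z10 : BPV G V1a Vb0, ∑ z00 : BPV G V0a Vb0,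
          (if EV G Eud z00 z10 ∧ EH G Elr z10 z11 then v z00 else 0) := by
          refine Finset.sum_congr rfl fun z10 _ => ?_
          split_ifs with h
          · exact Finset.sum_congr rfl fun z00 _ => by simp [h]
          · simp [h]
      _ = ∑ z00 : BPV G V0a Vb0, ∑ z10 : BPV G V1a Vb0,
          (if EV G Eud z00 z10 ∧ EH G Elr z10 z11 then v z00 else 0) := Finset.sum_comm
      _ = _ := by
          refine Finset.sum_congr rfl fun z00 _ => ?_
          rw [Finset.sum_ite, Finset.sum_const_zero, add_zero, Finset.sum_const,
            nsmul_eq_mul]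
  have t2 : (∑ z01 : BPV G V0a Vb1, if EV G Eud z01 z11 then
        (∑ z00 : BPV G V0a Vb0, if EH G Elr z00 z01 then v z00 else 0) else 0)
      = ∑ z00 : BPV G V0a Vb0,
        ((Finset.univ.filter fun z01 : BPV G V0a Vb1 =>
          EH G Elr z00 z01 ∧ EV G Eud z01 z11).card : ZMod 2) * v z00 := by
    calc _ = ∑ z01 : BPV G V0a Vb1, ∑ z00 : BPV G V0a Vb0,
          (if EH G Elr z00 z01 ∧ EV G Eud z01 z11 then v z00 else 0) := by
          refine Finset.sum_congr rfl fun z01 _ => ?_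
          split_ifs with h
          · exact Finset.sum_congr rfl fun z00 _ => by simp [h]
          · simp [h]
      _ = ∑ z00 : BPV G V0a Vb0, ∑ z01 : BPV G V0a Vb1,
          (if EH G Elr z00 z01 ∧ EV G Eud z01 z11 then v z00 else 0) := Finset.sum_comm
      _ = _ := by
          refine Finset.sum_congr rfl fun z00 _ => ?_
          rw [Finset.sum_ite, Finset.sum_const_zero, add_zero, Finset.sum_const,
            nsmul_eq_mul]
  rw [t1, t2, ← Finset.sum_add_distrib]
  refine Finset.sum_eq_zero fun z00 _ => ?_
  rw [key z00]
  have : ∀ a : ZMod 2, a + a = 0 := by decide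
  exact this _
end
end

section
/- Let X↕ = (V0•, V1•, E↕) and X↔ = (V•0, V•1, E↔) be bipartite graphs with free G-invariant actions, and form the balanced product X↕ ×_G X↔. Then the bipartite graph (V00, V10, E•0) is isomorphic to the disjoint union of |V•0/G| copies of X↕, indexed by the orbit space V•0/G: there exist bijections φ0 : V00 → (V•0/G) × V0• and φ1 : V10 → (V•0/G) × V1• such that (z00, z10) ∈ E•0 if and only if φ0(z00) and φ1(z10) have the same first coordinate and their second coordinates form an edge of E↕. The analogous statements hold for (V01, V11, E•1) (|V•1/G| copies of X↕), for (V00, V01, E0•) (|V0•/G| copies of X↔), and for (V10, V11, E1•) (|V1•/G| copies of X↔). -/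
open scoped Classical

noncomputable section

/-- The orbit space `V/G`. -/
abbrev OrbQ (G : Type*) [Group G] (A : Type*) [MulAction G A] :=
  Quotient (MulAction.orbitRel G A)

section Aux
variable (G : Type*) [Group G] {A B : Type*} [MulAction G A] [MulAction G B]

noncomputable def sigg (b : B) : G :=
  Classical.choose (MulAction.mem_orbit_iff.mp
    (Quotient.mk_out (s := MulAction.orbitRel G B) b))

theorem sigg_spec (b : B) :
    sigg G b • b = (Quotient.mk (MulAction.orbitRel G B) b).out :=
  Classical.choose_spec (MulAction.mem_orbit_iff.mp
    (Quotient.mk_out (s := MulAction.orbitRel G B) b))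

variable (hfree : ∀ (g : G) (b : B), g • b = b → g = 1)

theorem sigg_mul (hfree : ∀ (g : G) (b : B), g • b = b → g = 1)
    (g : G) (b : B) : sigg G (g • b) * g = sigg G b := by
  have h1 : sigg G (g • b) • (g • b) = (Quotient.mk (MulAction.orbitRel G B) (g • b)).out :=
    sigg_spec G (g • b)
  have hq : Quotient.mk (MulAction.orbitRel G B) (g • b) =
      Quotient.mk (MulAction.orbitRel G B) b :=
    Quotient.sound (MulAction.mem_orbit _ g)
  have h2 : sigg G b • b = (Quotient.mk (MulAction.orbitRel G B) b).out := sigg_spec G b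
  rw [hq, ← h2, smul_smul] at h1
  have : ((sigg G b)⁻¹ * (sigg G (g • b) * g)) • b = b := by
    rw [mul_smul, h1, ← mul_smul, inv_mul_cancel, one_smul]
  exact (inv_mul_eq_one.mp (hfree _ _ this)).symm

noncomputable def bpEquiv : BPV G A B ≃ OrbQ G B × A where
  toFun := Quotient.lift
    (fun p => (Quotient.mk (MulAction.orbitRel G B) p.2, sigg G p.2 • p.1))
    (by
      rintro ⟨a, b⟩ ⟨a', b'⟩ h
      obtain ⟨g, hg⟩ := h
      simp only [Prod.smul_mk] at hg
      injection hg with h1 h2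
      subst h1; subst h2
      refine Prod.ext ?_ ?_
      · exact Quotient.sound (MulAction.mem_orbit _ g)
      · simp only
        rw [smul_smul, sigg_mul G hfree g b'])
  invFun := fun p => bpmk G p.2 p.1.out
  left_inv := by
    rintro ⟨⟨a, b⟩⟩
    simp only [Quotient.lift_mk]
    refine Quotient.sound ?_
    refine ⟨sigg G b, ?_⟩
    refine Prod.ext ?_ ?_
    · rfl
    · exact sigg_spec G b
  right_inv := by
    rintro ⟨q, a⟩
    simp only [bpmk, Quotient.lift_mk]
    have hq : Quotient.mk (MulAction.orbitRel G B) q.out = q := Quotient.out_eq q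
    have h1 : sigg G q.out • q.out = q.out := by
      have := sigg_spec G q.out; rwa [hq] at this
    have h2 : sigg G (q.out) = 1 := hfree _ _ h1
    rw [hq, h2, one_smul]

theorem bpEquiv_mk (a : A) (b : B) :
    bpEquiv G hfree (bpmk G a b) =
      (Quotient.mk (MulAction.orbitRel G B) b, sigg G b • a) := rfl

theorem bpEquiv_symm (q : OrbQ G B) (a : A) :
    (bpEquiv G hfree).symm (q, a) = bpmk G a q.out := rfl

end Aux

theorem key {G A0 A1 B : Type*} [Group G] [MulAction G A0] [MulAction G A1] [MulAction G B]
    (E : A0 → A1 → Prop)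
    (hfree : ∀ (g : G) (b : B), g • b = b → g = 1)
    (hinv : ∀ (g : G) (x0 : A0) (x1 : A1), E x0 x1 → E (g • x0) (g • x1)) :
    ∃ (φ0 : BPV G A0 B ≃ OrbQ G B × A0) (φ1 : BPV G A1 B ≃ OrbQ G B × A1),
      ∀ z0 z1, EV G E z0 z1 ↔ (φ0 z0).1 = (φ1 z1).1 ∧ E (φ0 z0).2 (φ1 z1).2 := by
  refine ⟨bpEquiv G hfree, bpEquiv G hfree, fun z0 z1 => ?_⟩
  constructor
  · rintro ⟨x0, x1, y, hE, rfl, rfl⟩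
    rw [bpEquiv_mk, bpEquiv_mk]
    exact ⟨rfl, hinv _ _ _ hE⟩
  · rintro ⟨h1, h2⟩
    refine ⟨(bpEquiv G hfree z0).2, (bpEquiv G hfree z1).2, (bpEquiv G hfree z0).1.out,
      h2, ?_, ?_⟩
    · conv_lhs => rw [← (bpEquiv G hfree).symm_apply_apply z0]
      rfl
    · conv_lhs => rw [← (bpEquiv G hfree).symm_apply_apply z1]
      rw [h1]
      rfl
def bpswap (G : Type*) [Group G] (A B : Type*) [MulAction G A] [MulAction G B] :
    BPV G A B ≃ BPV G B A :=
  Quotient.congr (Equiv.prodComm A B) (by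
    rintro ⟨a, b⟩ ⟨a', b'⟩
    constructor
    · rintro ⟨g, hg⟩
      simp only [Prod.smul_mk] at hg
      injection hg with h1 h2
      exact ⟨g, by simp [Prod.smul_mk, h1, h2]⟩
    · rintro ⟨g, hg⟩
      simp only [Equiv.prodComm_apply, Prod.swap, Prod.smul_mk] at hg
      injection hg with h1 h2
      exact ⟨g, by simp [Prod.smul_mk, h1, h2]⟩)

theorem bpswap_mk {G : Type*} [Group G] {A B : Type*} [MulAction G A] [MulAction G B]
    (a : A) (b : B) : bpswap G A B (bpmk G a b) = bpmk G b a := rfl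

theorem bpswap_symm_mk {G : Type*} [Group G] {A B : Type*} [MulAction G A] [MulAction G B]
    (a : A) (b : B) : (bpswap G A B).symm (bpmk G b a) = bpmk G a b := by
  have := congrArg (bpswap G A B).symm (bpswap_mk a b)
  rwa [Equiv.symm_apply_apply] at this

theorem EH_iff_EV {G A B0 B1 : Type*} [Group G] [MulAction G A] [MulAction G B0]
    [MulAction G B1] (E : B0 → B1 → Prop) (z0 : BPV G A B0) (z1 : BPV G A B1) :
    EH G E z0 z1 ↔ EV G E (bpswap G A B0 z0) (bpswap G A B1 z1) := by
  constructor
  · rintro ⟨x, y0, y1, hE, rfl, rfl⟩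
    exact ⟨y0, y1, x, hE, rfl, rfl⟩
  · rintro ⟨y0, y1, x, hE, h0, h1⟩
    refine ⟨x, y0, y1, hE, ?_, ?_⟩
    · rw [← (bpswap G A B0).symm_apply_apply z0, h0, bpswap_symm_mk]
    · rw [← (bpswap G A B1).symm_apply_apply z1, h1, bpswap_symm_mk]

theorem keyH {G A B0 B1 : Type*} [Group G] [MulAction G A] [MulAction G B0] [MulAction G B1]
    (E : B0 → B1 → Prop)
    (hfree : ∀ (g : G) (a : A), g • a = a → g = 1)
    (hinv : ∀ (g : G) (y0 : B0) (y1 : B1), E y0 y1 → E (g • y0) (g • y1)) :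
    ∃ (φ0 : BPV G A B0 ≃ OrbQ G A × B0) (φ1 : BPV G A B1 ≃ OrbQ G A × B1),
      ∀ z0 z1, EH G E z0 z1 ↔ (φ0 z0).1 = (φ1 z1).1 ∧ E (φ0 z0).2 (φ1 z1).2 := by
  obtain ⟨ψ0, ψ1, h⟩ := key (G := G) (B := A) E hfree hinv
  refine ⟨(bpswap G A B0).trans ψ0, (bpswap G A B1).trans ψ1, fun z0 z1 => ?_⟩
  rw [EH_iff_EV]
  exact h _ _


/-- **The one-dimensional subgraphs of a balanced product are disjoint unions of copies of
the factors.** `(V00, V10, E•0)` is isomorphic to `|V•0/G|` copies of `X↕` indexed by the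
orbit space `V•0/G`, and analogously for the other three subgraphs. -/
theorem balanced_product_subgraph_copies
    {G V0a V1a Vb0 Vb1 : Type*} [Group G]
    [MulAction G V0a] [MulAction G V1a] [MulAction G Vb0] [MulAction G Vb1]
    (Eud : V0a → V1a → Prop) (Elr : Vb0 → Vb1 → Prop)
    (hfree0a : ∀ (g : G) (x : V0a), g • x = x → g = 1)
    (hfree1a : ∀ (g : G) (x : V1a), g • x = x → g = 1)
    (hfreeb0 : ∀ (g : G) (y : Vb0), g • y = y → g = 1)
    (hfreeb1 : ∀ (g : G) (y : Vb1), g • y = y → g = 1)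
    (hinvud : ∀ (g : G) (x0 : V0a) (x1 : V1a), Eud x0 x1 → Eud (g • x0) (g • x1))
    (hinvlr : ∀ (g : G) (y0 : Vb0) (y1 : Vb1), Elr y0 y1 → Elr (g • y0) (g • y1)) :
    (∃ (φ0 : BPV G V0a Vb0 ≃ OrbQ G Vb0 × V0a) (φ1 : BPV G V1a Vb0 ≃ OrbQ G Vb0 × V1a),
      ∀ (z00 : BPV G V0a Vb0) (z10 : BPV G V1a Vb0),
        EV G Eud z00 z10 ↔ (φ0 z00).1 = (φ1 z10).1 ∧ Eud (φ0 z00).2 (φ1 z10).2) ∧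
    (∃ (φ0 : BPV G V0a Vb1 ≃ OrbQ G Vb1 × V0a) (φ1 : BPV G V1a Vb1 ≃ OrbQ G Vb1 × V1a),
      ∀ (z01 : BPV G V0a Vb1) (z11 : BPV G V1a Vb1),
        EV G Eud z01 z11 ↔ (φ0 z01).1 = (φ1 z11).1 ∧ Eud (φ0 z01).2 (φ1 z11).2) ∧
    (∃ (φ0 : BPV G V0a Vb0 ≃ OrbQ G V0a × Vb0) (φ1 : BPV G V0a Vb1 ≃ OrbQ G V0a × Vb1),
      ∀ (z00 : BPV G V0a Vb0) (z01 : BPV G V0a Vb1),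
        EH G Elr z00 z01 ↔ (φ0 z00).1 = (φ1 z01).1 ∧ Elr (φ0 z00).2 (φ1 z01).2) ∧
    (∃ (φ0 : BPV G V1a Vb0 ≃ OrbQ G V1a × Vb0) (φ1 : BPV G V1a Vb1 ≃ OrbQ G V1a × Vb1),
      ∀ (z10 : BPV G V1a Vb0) (z11 : BPV G V1a Vb1),
        EH G Elr z10 z11 ↔ (φ0 z10).1 = (φ1 z11).1 ∧ Elr (φ0 z10).2 (φ1 z11).2) :=
  ⟨key Eud hfreeb0 hinvud, key Eud hfreeb1 hinvud,
   keyH Elr hfree0a hinvlr, keyH Elr hfree1a hinvlr⟩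
end
end

section
/- (Constant rate) Let X↕ = (V0•, V1•, E↕) be a (w↓, w↑)-regular bipartite graph and X↔ = (V•0, V•1, E↔) a (w→, w←)-regular bipartite graph, both with free G-invariant actions, and consider the F2 chain complex F2^{V00} → F2^{V10} ⊕ F2^{V01} → F2^{V11} associated with the balanced product X↕ ×_G X↔. Then the vertex counts satisfy |V00| : |V10| : |V01| : |V11| = w↑·w← : w↓·w← : w↑·w→ : w↓·w→, and the number of logical qubits k = dim_{F2}(Ker ∂1) − dim_{F2}(Im ∂2) of the associated CSS code satisfies k ≥ |V10| + |V01| − |V00| − |V11|, and hence k·(w↓·w← + w↑·w→) ≥ n·(w↓ − w↑)·(w← − w→), where n = |V10| + |V01| is the code length. -/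
open scoped Classical

noncomputable section

/-- The F2 adjacency map as a linear map. -/
def adjLin {A B : Type*} [Fintype A] (E : A → B → Prop) :
    (A → ZMod 2) →ₗ[ZMod 2] (B → ZMod 2) where
  toFun := adj E
  map_add' v w := by
    funext b
    simp only [adj, Pi.add_apply, ← Finset.sum_add_distrib]
    exact Finset.sum_congr rfl fun a _ => by split <;> simp
  map_smul' c v := by
    funext b
    simp only [adj, Pi.smul_apply, RingHom.id_apply, Finset.smul_sum]
    exact Finset.sum_congr rfl fun a _ => by split <;> simp

/-- `(w0, w1)`-regularity of a bipartite graph. -/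
def BiRegular {V0 V1 : Type*} [Fintype V0] [Fintype V1]
    (E : V0 → V1 → Prop) (w0 w1 : ℕ) : Prop :=
  (∀ x : V0, degL E x = w0) ∧ (∀ y : V1, degR E y = w1)

/-- The boundary map `∂2 = (L(E•0), L(E0•))` of the balanced product chain complex, as a
linear map. -/
def D2 (G : Type*) [Group G] {V0a V1a Vb0 Vb1 : Type*}
    [Fintype V0a] [Fintype V1a] [Fintype Vb0] [Fintype Vb1]
    [MulAction G V0a] [MulAction G V1a] [MulAction G Vb0] [MulAction G Vb1]
    (Eud : V0a → V1a → Prop) (Elr : Vb0 → Vb1 → Prop) :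
    (BPV G V0a Vb0 → ZMod 2) →ₗ[ZMod 2]
      (BPV G V1a Vb0 → ZMod 2) × (BPV G V0a Vb1 → ZMod 2) :=
  LinearMap.prod
    (adjLin (EV G Eud : BPV G V0a Vb0 → BPV G V1a Vb0 → Prop))
    (adjLin (EH G Elr : BPV G V0a Vb0 → BPV G V0a Vb1 → Prop))

/-- The boundary map `∂1 = L(E1•) ⊕ L(E•1)` of the balanced product chain complex, as a
linear map. -/
def D1 (G : Type*) [Group G] {V0a V1a Vb0 Vb1 : Type*}
    [Fintype V0a] [Fintype V1a] [Fintype Vb0] [Fintype Vb1]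
    [MulAction G V0a] [MulAction G V1a] [MulAction G Vb0] [MulAction G Vb1]
    (Eud : V0a → V1a → Prop) (Elr : Vb0 → Vb1 → Prop) :
    ((BPV G V1a Vb0 → ZMod 2) × (BPV G V0a Vb1 → ZMod 2)) →ₗ[ZMod 2]
      (BPV G V1a Vb1 → ZMod 2) :=
  LinearMap.coprod
    (adjLin (EH G Elr : BPV G V1a Vb0 → BPV G V1a Vb1 → Prop))
    (adjLin (EV G Eud : BPV G V0a Vb1 → BPV G V1a Vb1 → Prop))


section Helpers

open MulAction

lemma card_orbitQuot_mul_natCard {G β : Type*} [Group G] [MulAction G β] [Fintype β]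
    (hfree : ∀ (g : G) (x : β), g • x = x → g = 1) :
    Fintype.card (Quotient (MulAction.orbitRel G β)) * Nat.card G = Fintype.card β := by
  rcases isEmpty_or_nonempty β with h | hne
  · haveI : IsEmpty (Quotient (MulAction.orbitRel G β)) :=
      ⟨fun q => Quotient.ind (motive := fun _ => False) (fun b => h.elim b) q⟩
    rw [Fintype.card_eq_zero, Fintype.card_eq_zero, zero_mul]
  · obtain ⟨x⟩ := hne
    have hinj : Function.Injective (fun g : G => g • x) := by
      intro g h hgh
      simp only at hgh
      have h1 : (h⁻¹ * g) • x = x := by rw [mul_smul, hgh, inv_smul_smul]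
      have h2 := hfree _ _ h1
      rwa [inv_mul_eq_one, eq_comm] at h2
    have : Finite G := Finite.of_injective _ hinj
    cases nonempty_fintype G
    have hstab : ∀ b : β, stabilizer G b = ⊥ := fun b =>
      (Subgroup.eq_bot_iff_forall _).mpr fun g hg => hfree g b hg
    have key : Fintype.card β =
        Fintype.card (Quotient (MulAction.orbitRel G β)) * Fintype.card G := by
      rw [Fintype.card_congr (MulAction.selfEquivSigmaOrbitsQuotientStabilizer G β),
        Fintype.card_sigma,
        Finset.sum_congr rfl (fun ω _ => Fintype.card_congr
          ((Subgroup.quotientEquivOfEq (hstab _)).trans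
            (QuotientGroup.quotientBot (G := G)).toEquiv)),
        Finset.sum_const, Finset.card_univ, smul_eq_mul]
    rw [Nat.card_eq_fintype_card, key]

lemma natCard_zero_isEmpty {G A : Type*} [Group G] [MulAction G A] [Finite A]
    (hfree : ∀ (g : G) (x : A), g • x = x → g = 1) (hN : Nat.card G = 0) : IsEmpty A := by
  by_contra h
  rw [not_isEmpty_iff] at h
  obtain ⟨x⟩ := h
  have hinj : Function.Injective (fun g : G => g • x) := by
    intro g h hgh
    simp only at hgh
    have h1 : (h⁻¹ * g) • x = x := by rw [mul_smul, hgh, inv_smul_smul]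
    have h2 := hfree _ _ h1
    rwa [inv_mul_eq_one, eq_comm] at h2
  have : Finite G := Finite.of_injective _ hinj
  exact absurd hN Nat.card_pos.ne'

lemma prod_free {G A B : Type*} [Group G] [MulAction G A] [MulAction G B]
    (hf : ∀ (g : G) (x : A), g • x = x → g = 1) :
    ∀ (g : G) (p : A × B), g • p = p → g = 1 :=
  fun g p hp => hf g p.1 (congrArg Prod.fst hp)

lemma card_bpv {G A B : Type*} [Group G] [MulAction G A] [MulAction G B]
    [Fintype A] [Fintype B]
    (hf : ∀ (g : G) (x : A), g • x = x → g = 1) :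
    Fintype.card (BPV G A B) * Nat.card G = Fintype.card A * Fintype.card B :=
  (card_orbitQuot_mul_natCard (prod_free hf)).trans (Fintype.card_prod _ _)

lemma bpv_isEmpty {G A B : Type*} [Group G] [MulAction G A] [MulAction G B]
    (h : IsEmpty (A × B)) : IsEmpty (BPV G A B) :=
  ⟨fun q => Quotient.ind (motive := fun _ => False) (fun p => h.elim p) q⟩

lemma bireg_count {V0 V1 : Type*} [Fintype V0] [Fintype V1] (E : V0 → V1 → Prop) {w0 w1 : ℕ}
    (h : BiRegular E w0 w1) : Fintype.card V0 * w0 = Fintype.card V1 * w1 := by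
  have key : ∑ x : V0, degL E x = ∑ y : V1, degR E y := by
    simp only [degL, degR, Finset.card_filter]
    exact Finset.sum_comm
  rw [Finset.sum_congr rfl fun x _ => h.1 x, Finset.sum_congr rfl fun y _ => h.2 y,
    Finset.sum_const, Finset.sum_const, smul_eq_mul, smul_eq_mul, Finset.card_univ,
    Finset.card_univ] at key
  exact key

end Helpers

/-- **Constant rate.** For the balanced product of a `(w↓, w↑)`-regular graph with a
`(w→, w←)`-regular graph (free `G`-invariant actions), the vertex counts are in ratio
`|V00| : |V10| : |V01| : |V11| = w↑w← : w↓w← : w↑w→ : w↓w→`, the number of logical qubits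
`k = dim Ker ∂1 − dim Im ∂2` satisfies `k ≥ |V10| + |V01| − |V00| − |V11|`, and hence
`k·(w↓w← + w↑w→) ≥ n·(w↓ − w↑)·(w← − w→)` where `n = |V10| + |V01|`. -/
theorem constant_rate
    {G V0a V1a Vb0 Vb1 : Type*} [Group G]
    [Fintype V0a] [Fintype V1a] [Fintype Vb0] [Fintype Vb1]
    [MulAction G V0a] [MulAction G V1a] [MulAction G Vb0] [MulAction G Vb1]
    (Eud : V0a → V1a → Prop) (Elr : Vb0 → Vb1 → Prop)
    (wd wu wr wl : ℕ)
    (hfree0a : ∀ (g : G) (x : V0a), g • x = x → g = 1)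
    (hfree1a : ∀ (g : G) (x : V1a), g • x = x → g = 1)
    (hfreeb0 : ∀ (g : G) (y : Vb0), g • y = y → g = 1)
    (hfreeb1 : ∀ (g : G) (y : Vb1), g • y = y → g = 1)
    (hinvud : ∀ (g : G) (x0 : V0a) (x1 : V1a), Eud x0 x1 → Eud (g • x0) (g • x1))
    (hinvlr : ∀ (g : G) (y0 : Vb0) (y1 : Vb1), Elr y0 y1 → Elr (g • y0) (g • y1))
    (hregud : BiRegular Eud wd wu)
    (hreglr : BiRegular Elr wr wl) :
    Fintype.card (BPV G V0a Vb0) * (wd * wl) = Fintype.card (BPV G V1a Vb0) * (wu * wl) ∧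
    Fintype.card (BPV G V0a Vb0) * (wu * wr) = Fintype.card (BPV G V0a Vb1) * (wu * wl) ∧
    Fintype.card (BPV G V0a Vb0) * (wd * wr) = Fintype.card (BPV G V1a Vb1) * (wu * wl) ∧
    ((Module.finrank (ZMod 2) (LinearMap.ker (D1 G Eud Elr)) : ℤ)
        - (Module.finrank (ZMod 2) (LinearMap.range (D2 G Eud Elr)) : ℤ)
      ≥ (Fintype.card (BPV G V1a Vb0) : ℤ) + (Fintype.card (BPV G V0a Vb1) : ℤ)
        - (Fintype.card (BPV G V0a Vb0) : ℤ) - (Fintype.card (BPV G V1a Vb1) : ℤ)) ∧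
    (((Module.finrank (ZMod 2) (LinearMap.ker (D1 G Eud Elr)) : ℤ)
        - (Module.finrank (ZMod 2) (LinearMap.range (D2 G Eud Elr)) : ℤ))
        * ((wd : ℤ) * (wl : ℤ) + (wu : ℤ) * (wr : ℤ))
      ≥ ((Fintype.card (BPV G V1a Vb0) : ℤ) + (Fintype.card (BPV G V0a Vb1) : ℤ))
        * ((wd : ℤ) - (wu : ℤ)) * ((wl : ℤ) - (wr : ℤ))) := by
    classical
  have h00 := card_bpv (G := G) (A := V0a) (B := Vb0) hfree0a
  have h10 := card_bpv (G := G) (A := V1a) (B := Vb0) hfree1a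
  have h01 := card_bpv (G := G) (A := V0a) (B := Vb1) hfree0a
  have h11 := card_bpv (G := G) (A := V1a) (B := Vb1) hfree1a
  have hud := bireg_count Eud hregud
  have hlr := bireg_count Elr hreglr
  -- Part 4: the dimension bound
  have hrk := LinearMap.finrank_range_add_finrank_ker (D1 G Eud Elr)
  have hdom : Module.finrank (ZMod 2)
      ((BPV G V1a Vb0 → ZMod 2) × (BPV G V0a Vb1 → ZMod 2))
      = Fintype.card (BPV G V1a Vb0) + Fintype.card (BPV G V0a Vb1) := by
    rw [Module.finrank_prod, Module.finrank_fintype_fun_eq_card,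
      Module.finrank_fintype_fun_eq_card]
  rw [hdom] at hrk
  have hr1 : Module.finrank (ZMod 2) (LinearMap.range (D1 G Eud Elr))
      ≤ Fintype.card (BPV G V1a Vb1) := by
    have h := Submodule.finrank_le (LinearMap.range (D1 G Eud Elr))
    rwa [Module.finrank_fintype_fun_eq_card] at h
  have hr2 : Module.finrank (ZMod 2) (LinearMap.range (D2 G Eud Elr))
      ≤ Fintype.card (BPV G V0a Vb0) := by
    have h := LinearMap.finrank_range_le (D2 G Eud Elr)
    rwa [Module.finrank_fintype_fun_eq_card] at h
  have h4 : (Module.finrank (ZMod 2) (LinearMap.ker (D1 G Eud Elr)) : ℤ)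
        - (Module.finrank (ZMod 2) (LinearMap.range (D2 G Eud Elr)) : ℤ)
      ≥ (Fintype.card (BPV G V1a Vb0) : ℤ) + (Fintype.card (BPV G V0a Vb1) : ℤ)
        - (Fintype.card (BPV G V0a Vb0) : ℤ) - (Fintype.card (BPV G V1a Vb1) : ℤ) := by
    omega
  -- Parts 1-3 and the key counting identity
  have hE : Fintype.card (BPV G V0a Vb0) * (wd * wl)
        = Fintype.card (BPV G V1a Vb0) * (wu * wl) ∧
      Fintype.card (BPV G V0a Vb0) * (wu * wr)
        = Fintype.card (BPV G V0a Vb1) * (wu * wl) ∧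
      Fintype.card (BPV G V0a Vb0) * (wd * wr)
        = Fintype.card (BPV G V1a Vb1) * (wu * wl) ∧
      (Fintype.card (BPV G V1a Vb0) + Fintype.card (BPV G V0a Vb1)) * (wd * wr + wu * wl)
        = (Fintype.card (BPV G V0a Vb0) + Fintype.card (BPV G V1a Vb1))
            * (wd * wl + wu * wr) := by
    rcases Nat.eq_zero_or_pos (Nat.card G) with hN | hN
    · haveI e0a : IsEmpty V0a := natCard_zero_isEmpty hfree0a hN
      haveI e1a : IsEmpty V1a := natCard_zero_isEmpty hfree1a hN
      haveI := bpv_isEmpty (G := G) (A := V0a) (B := Vb0) inferInstance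
      haveI := bpv_isEmpty (G := G) (A := V1a) (B := Vb0) inferInstance
      haveI := bpv_isEmpty (G := G) (A := V0a) (B := Vb1) inferInstance
      haveI := bpv_isEmpty (G := G) (A := V1a) (B := Vb1) inferInstance
      have z00 : Fintype.card (BPV G V0a Vb0) = 0 := Fintype.card_eq_zero
      have z10 : Fintype.card (BPV G V1a Vb0) = 0 := Fintype.card_eq_zero
      have z01 : Fintype.card (BPV G V0a Vb1) = 0 := Fintype.card_eq_zero
      have z11 : Fintype.card (BPV G V1a Vb1) = 0 := Fintype.card_eq_zero
      simp [z00, z10, z01, z11]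
    · have H00 : (Fintype.card (BPV G V0a Vb0) : ℤ) * (Nat.card G : ℤ)
          = (Fintype.card V0a : ℤ) * (Fintype.card Vb0 : ℤ) := by exact_mod_cast h00
      have H10 : (Fintype.card (BPV G V1a Vb0) : ℤ) * (Nat.card G : ℤ)
          = (Fintype.card V1a : ℤ) * (Fintype.card Vb0 : ℤ) := by exact_mod_cast h10
      have H01 : (Fintype.card (BPV G V0a Vb1) : ℤ) * (Nat.card G : ℤ)
          = (Fintype.card V0a : ℤ) * (Fintype.card Vb1 : ℤ) := by exact_mod_cast h01
      have H11 : (Fintype.card (BPV G V1a Vb1) : ℤ) * (Nat.card G : ℤ)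
          = (Fintype.card V1a : ℤ) * (Fintype.card Vb1 : ℤ) := by exact_mod_cast h11
      have Hud : (Fintype.card V0a : ℤ) * (wd : ℤ)
          = (Fintype.card V1a : ℤ) * (wu : ℤ) := by exact_mod_cast hud
      have Hlr : (Fintype.card Vb0 : ℤ) * (wr : ℤ)
          = (Fintype.card Vb1 : ℤ) * (wl : ℤ) := by exact_mod_cast hlr
      refine ⟨?_, ?_, ?_, ?_⟩
      · refine Nat.eq_of_mul_eq_mul_right hN ?_
        zify
        linear_combination ((wd : ℤ) * wl) * H00 - ((wu : ℤ) * wl) * H10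
          + ((Fintype.card Vb0 : ℤ) * wl) * Hud
      · refine Nat.eq_of_mul_eq_mul_right hN ?_
        zify
        linear_combination ((wu : ℤ) * wr) * H00 - ((wu : ℤ) * wl) * H01
          + ((Fintype.card V0a : ℤ) * wu) * Hlr
      · refine Nat.eq_of_mul_eq_mul_right hN ?_
        zify
        linear_combination ((wd : ℤ) * wr) * H00 - ((wu : ℤ) * wl) * H11
          + ((Fintype.card Vb0 : ℤ) * wr) * Hud + ((Fintype.card V1a : ℤ) * wu) * Hlr
      · refine Nat.eq_of_mul_eq_mul_right hN ?_
        zify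
        linear_combination ((wd : ℤ) * wr + (wu : ℤ) * wl) * H10
          + ((wd : ℤ) * wr + (wu : ℤ) * wl) * H01
          - ((wd : ℤ) * wl + (wu : ℤ) * wr) * H00
          - ((wd : ℤ) * wl + (wu : ℤ) * wr) * H11
          + ((Fintype.card Vb1 : ℤ) * wr - (Fintype.card Vb0 : ℤ) * wl) * Hud
          + ((Fintype.card V1a : ℤ) * wd - (Fintype.card V0a : ℤ) * wu) * Hlr
  obtain ⟨e1, e2, e3, E⟩ := hE
  refine ⟨e1, e2, e3, h4, ?_⟩
  have E' : ((Fintype.card (BPV G V1a Vb0) : ℤ) + (Fintype.card (BPV G V0a Vb1) : ℤ))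
        * ((wd : ℤ) * wr + (wu : ℤ) * wl)
      = ((Fintype.card (BPV G V0a Vb0) : ℤ) + (Fintype.card (BPV G V1a Vb1) : ℤ))
        * ((wd : ℤ) * wl + (wu : ℤ) * wr) := by exact_mod_cast E
  have hS : (0 : ℤ) ≤ (wd : ℤ) * (wl : ℤ) + (wu : ℤ) * (wr : ℤ) := by positivity
  have heq : ((Fintype.card (BPV G V1a Vb0) : ℤ) + (Fintype.card (BPV G V0a Vb1) : ℤ)
        - (Fintype.card (BPV G V0a Vb0) : ℤ) - (Fintype.card (BPV G V1a Vb1) : ℤ))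
        * ((wd : ℤ) * (wl : ℤ) + (wu : ℤ) * (wr : ℤ))
      = ((Fintype.card (BPV G V1a Vb0) : ℤ) + (Fintype.card (BPV G V0a Vb1) : ℤ))
        * ((wd : ℤ) - (wu : ℤ)) * ((wl : ℤ) - (wr : ℤ)) := by linear_combination E'
  rw [ge_iff_le, ← heq]
  exact mul_le_mul_of_nonneg_right h4 hS
end
end
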